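/- Let M = ⊕_{n∈(1/T)ℕ} M(n) be a (1/T)ℕ-graded g-twisted V_B-module, let 0 < r ≤ T-1, let a ∈ A^r, a' ∈ A^{T-r}, b ∈ B^{T-r}, and w ∈ M(0). Then (aa')·w = 0 and (ab)·w = (1 - r/T)(a₀b)·w, where the actions are x·w = x_{-1}w for x ∈ A⁰ and y·w = y₀w for y ∈ B⁰. -/

import Mathlib

noncomputable section

/-- Generalized binomial coefficient `C(q, n)` for `q ∈ ℚ`. -/
def qchoose (q : ℚ) (n : ℕ) : ℚ :=
  (∏ i ∈ Finset.range n, (q - i)) / (n.factorial : ℚ)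

/-- A vertex algebra over ℂ: `Y u n v = uₙv`, with vacuum `vac = 𝟙`, the
truncation, vacuum and creation properties, and the Borcherds (Jacobi)
identity in component form. -/
structure VertexAlgebra (V : Type*) [AddCommGroup V] [Module ℂ V] where
  Y : V →ₗ[ℂ] ℤ → V →ₗ[ℂ] V
  vac : V
  trunc : ∀ u v, ∃ N : ℤ, ∀ n ≥ N, Y u n v = 0
  vac_act : ∀ v : V, Y vac (-1) v = v
  vac_act' : ∀ (v : V) (n : ℤ), n ≠ -1 → Y vac n v = 0
  creation : ∀ u : V, Y u (-1) vac = u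
  creation' : ∀ (u : V) (n : ℤ), 0 ≤ n → Y u n vac = 0
  borcherds : ∀ (u v w : V) (p q r : ℤ),
    ∑ᶠ i : ℕ, ((qchoose (p : ℚ) i : ℚ) : ℂ) • Y (Y u (r + i) v) (p + q - i) w
      = ∑ᶠ i : ℕ, ((-1 : ℂ) ^ i * ((qchoose (r : ℚ) i : ℚ) : ℂ)) •
          (Y u (p + r - i) (Y v (q + i) w)
            - ((-1 : ℂ) ^ r) • Y v (q + r - i) (Y u (p + i) w))

/-- A vertex `A`-algebroid: `act a v = a*v`, `br` the Leibniz bracket,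
`pi b a = π(b)(a)` the anchor, `pr u v = ⟨u,v⟩` the pairing, `d = ∂`. -/
structure VertexAlgebroid (A B : Type*) [CommRing A] [Algebra ℂ A]
    [AddCommGroup B] [Module ℂ B] where
  act : A →ₗ[ℂ] B →ₗ[ℂ] B
  act_one : ∀ v, act 1 v = v
  br : B →ₗ[ℂ] B →ₗ[ℂ] B
  leibniz : ∀ u v w, br u (br v w) = br (br u v) w + br v (br u w)
  pi : B →ₗ[ℂ] A →ₗ[ℂ] A
  pi_der : ∀ v a a', pi v (a * a') = a * pi v a' + (pi v a) * a'
  pi_hom : ∀ u v a, pi (br u v) a = pi u (pi v a) - pi v (pi u a)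
  pr : B →ₗ[ℂ] B →ₗ[ℂ] A
  pr_symm : ∀ u v, pr u v = pr v u
  d : A →ₗ[ℂ] B
  pi_d : ∀ a a', pi (d a) a' = 0
  id1 : ∀ a a' v, act a (act a' v) - act (a * a') v
          = act (pi v a) (d a') + act (pi v a') (d a)
  id2 : ∀ u a v, br u (act a v) = act (pi u a) v + act a (br u v)
  id3 : ∀ u v, br u v + br v u = d (pr u v)
  id4 : ∀ a v a', pi (act a v) a' = a * pi v a'
  id5 : ∀ a u v, pr (act a u) v = a * pr u v - pi u (pi v a)
  id6 : ∀ v v1 v2, pi v (pr v1 v2) = pr (br v v1) v2 + pr v1 (br v v2)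
  id7 : ∀ a a', d (a * a') = act a (d a') + act a' (d a)
  id8 : ∀ v a, br v (d a) = d (pi v a)
  id9 : ∀ v a, pr v (d a) = pi v a

/-- The data of the ℕ-graded vertex algebra `V_B` associated with a vertex
`A`-algebroid `B` (Gorbounov–Malikov–Schechtman): a vertex algebra `V` with
an internal ℕ-grading, with `(V_B)₍₀₎ = A`, `(V_B)₍₁₎ = B` (via the
embeddings `iA`, `iB`), vacuum equal to the identity `e` of `A`, the
structural identities `a₋₁a' = aa'`, `a₋₁b = ab`, `b₀b' = [b,b']`,
`b₁b' = ⟨b,b'⟩`, `b₀a = π(b)a`, `a₋₂𝟙 = ∂a`, and generated by `A ⊕ B`. -/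
structure GMSData (A B V : Type*) [CommRing A] [Algebra ℂ A]
    [AddCommGroup B] [Module ℂ B] [AddCommGroup V] [Module ℂ V]
    (Vb : VertexAlgebroid A B) where
  VA : VertexAlgebra V
  iA : A →ₗ[ℂ] V
  iB : B →ₗ[ℂ] V
  injA : Function.Injective iA
  injB : Function.Injective iB
  grade : ℕ → Submodule ℂ V
  internal : DirectSum.IsInternal grade
  grade0 : grade 0 = LinearMap.range iA
  grade1 : grade 1 = LinearMap.range iB
  grade_Y : ∀ (p q : ℕ) (u : V), u ∈ grade p → ∀ (n : ℤ), ∀ w ∈ grade q,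
      (((p : ℤ) + q - n - 1 < 0) → VA.Y u n w = 0) ∧
      (∀ m : ℕ, (m : ℤ) = (p : ℤ) + q - n - 1 → VA.Y u n w ∈ grade m)
  vac_eq : VA.vac = iA 1
  hAA : ∀ a a', VA.Y (iA a) (-1) (iA a') = iA (a * a')
  hAB : ∀ a b, VA.Y (iA a) (-1) (iB b) = iB (Vb.act a b)
  hBB0 : ∀ b b', VA.Y (iB b) 0 (iB b') = iB (Vb.br b b')
  hBB1 : ∀ b b', VA.Y (iB b) 1 (iB b') = iA (Vb.pr b b')
  hBA : ∀ b a, VA.Y (iB b) 0 (iA a) = iA (Vb.pi b a)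
  hD : ∀ a, VA.Y (iA a) (-2) VA.vac = iB (Vb.d a)
  generates : ∀ Wd : Submodule ℂ V, VA.vac ∈ Wd →
      (∀ u : V, (u ∈ LinearMap.range iA ∨ u ∈ LinearMap.range iB) →
        ∀ n : ℤ, ∀ w ∈ Wd, VA.Y u n w ∈ Wd) → Wd = ⊤

/-- An automorphism of a vertex `A`-algebroid `B`: a pair of an algebra
automorphism of `A` and a linear automorphism of `B` preserving all the
structure maps. -/
structure VAAut {A B : Type*} [CommRing A] [Algebra ℂ A]
    [AddCommGroup B] [Module ℂ B] (V : VertexAlgebroid A B) where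
  gA : A ≃ₐ[ℂ] A
  gB : B ≃ₗ[ℂ] B
  map_act : ∀ a v, gB (V.act a v) = V.act (gA a) (gB v)
  map_br : ∀ u v, gB (V.br u v) = V.br (gB u) (gB v)
  map_pr : ∀ u v, V.pr (gB u) (gB v) = gA (V.pr u v)
  map_d : ∀ a, gB (V.d a) = V.d (gA a)
  map_pi : ∀ b a, gA (V.pi b a) = V.pi (gB b) (gA a)

/-- A `g`-twisted module for a vertex algebra `V` with automorphism `g` of
order `T`. The operator `act v k` represents `v_{k/T}` (indices are in units
of `1/T`). -/
structure TwistedModule {V : Type*} [AddCommGroup V] [Module ℂ V]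
    (VA : VertexAlgebra V) (T : ℕ) (g : V ≃ₗ[ℂ] V)
    (W : Type*) [AddCommGroup W] [Module ℂ W] where
  act : V →ₗ[ℂ] ℤ → W →ₗ[ℂ] W
  trunc : ∀ (v : V) (w : W), ∃ N : ℤ, ∀ k ≥ N, act v k w = 0
  vac_act : ∀ w : W, act VA.vac (-(T : ℤ)) w = w
  vac_act' : ∀ (w : W) (k : ℤ), k ≠ -(T : ℤ) → act VA.vac k w = 0
  eigen : ∀ (u : V) (r : ℕ), r < T →
    g u = Complex.exp (2 * Real.pi * Complex.I * r / T) • u →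
    ∀ k : ℤ, ¬ (k ≡ (r : ℤ) [ZMOD (T : ℤ)]) → act u k = 0
  jacobi : ∀ (u : V) (r : ℕ), r < T →
    g u = Complex.exp (2 * Real.pi * Complex.I * r / T) • u →
    ∀ (v : V) (p s t : ℤ), s ≡ (r : ℤ) [ZMOD (T : ℤ)] → ∀ w : W,
    ∑ᶠ m : ℕ, ((qchoose ((s : ℚ) / T) m : ℚ) : ℂ) •
        act (VA.Y u (p + m) v) (s + t - m * T) w
      = ∑ᶠ m : ℕ, ((-1 : ℂ) ^ m * ((qchoose (p : ℚ) m : ℚ) : ℂ)) •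
          (act u (p * T + s - m * T) (act v (t + m * T) w)
            - ((-1 : ℂ) ^ p) • act v (p * T + t - m * T) (act u (s + m * T) w))

lemma qchoose_zero' (q : ℚ) : qchoose q 0 = 1 := by simp [qchoose]

lemma qchoose_one' (q : ℚ) : qchoose q 1 = q := by simp [qchoose]

lemma qchoose_zero_succ' (n : ℕ) : qchoose 0 (n + 1) = 0 := by
  unfold qchoose
  rw [Finset.prod_eq_zero (Finset.mem_range.mpr (Nat.succ_pos n)) (by norm_num)]
  simp

set_option maxHeartbeats 1000000 in
/-- for a `(1/T)ℕ`-graded `g`-twisted `V_B`-module `M`,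
`0 < r ≤ T-1`, `a ∈ A^r`, `a' ∈ A^{T-r}`, `b ∈ B^{T-r}` and `w ∈ M(0)`, one
has `(aa')·w = 0` and `(ab)·w = (1 - r/T)(a₀b)·w`, where `x·w = x₋₁w` for
`x ∈ A⁰` and `y·w = y₀w` for `y ∈ B⁰`, and `a₀b = -π(b)(a) ∈ A⁰`. -/
theorem stmt15 {A B V W : Type*} [CommRing A] [Algebra ℂ A]
    [AddCommGroup B] [Module ℂ B] [AddCommGroup V] [Module ℂ V]
    [AddCommGroup W] [Module ℂ W]
    (Vb : VertexAlgebroid A B) (D : GMSData A B V Vb)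
    (g : VAAut Vb) (T : ℕ) (hT : 0 < T)
    (hordA : ∀ a, (fun x => g.gA x)^[T] a = a)
    (hordB : ∀ b, (fun x => g.gB x)^[T] b = b)
    (G : V ≃ₗ[ℂ] V) (hvac : G D.VA.vac = D.VA.vac)
    (hY : ∀ (u : V) (n : ℤ) (v : V), G (D.VA.Y u n v) = D.VA.Y (G u) n (G v))
    (hGA : ∀ a, G (D.iA a) = D.iA (g.gA a))
    (hGB : ∀ b, G (D.iB b) = D.iB (g.gB b))
    (M : TwistedModule D.VA T G W)
    (grM : ℕ → Submodule ℂ W) (hint : DirectSum.IsInternal grM)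
    (hgrM : ∀ (p : ℕ) (u : V), u ∈ D.grade p → ∀ (k : ℤ) (q : ℕ), ∀ w ∈ grM q,
      (((q : ℤ) + p * T - k - T < 0) → M.act u k w = 0) ∧
      (∀ m : ℕ, (m : ℤ) = (q : ℤ) + p * T - k - T → M.act u k w ∈ grM m))
    (r : ℕ) (hr0 : 0 < r) (hrT : r ≤ T - 1)
    (a a' : A) (b : B)
    (ha : g.gA a = Complex.exp (2 * Real.pi * Complex.I * r / T) • a)
    (ha' : g.gA a' = Complex.exp (2 * Real.pi * Complex.I * (T - r : ℕ) / T) • a')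
    (hb : g.gB b = Complex.exp (2 * Real.pi * Complex.I * (T - r : ℕ) / T) • b)
    (w : W) (hw : w ∈ grM 0) :
    M.act (D.iA (a * a')) (-(T : ℤ)) w = 0 ∧
    M.act (D.iB (Vb.act a b)) 0 w
      = -((1 : ℂ) - (r : ℂ) / T) • M.act (D.iA (Vb.pi b a)) (-(T : ℤ)) w := by
  classical
  have hrT' : r < T := by omega
  -- eigenvector fact in V for `iA a`
  have hua : G (D.iA a) = Complex.exp (2 * Real.pi * Complex.I * r / T) • D.iA a := by
    rw [hGA, ha, map_smul]
  -- gradings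
  have haG : D.iA a ∈ D.grade 0 := by rw [D.grade0]; exact ⟨a, rfl⟩
  have ha'G : D.iA a' ∈ D.grade 0 := by rw [D.grade0]; exact ⟨a', rfl⟩
  have hbG : D.iB b ∈ D.grade 1 := by rw [D.grade1]; exact ⟨b, rfl⟩
  have hvacG : D.VA.vac ∈ D.grade 0 := by rw [D.vac_eq, D.grade0]; exact ⟨1, rfl⟩
  -- vanishing of Y-products by grading
  have hYaa' : ∀ n : ℤ, 0 ≤ n → D.VA.Y (D.iA a) n (D.iA a') = 0 := by
    intro n hn
    exact (D.grade_Y 0 0 _ haG n _ ha'G).1 (by push_cast; omega)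
  have hYab : ∀ n : ℤ, 1 ≤ n → D.VA.Y (D.iA a) n (D.iB b) = 0 := by
    intro n hn
    exact (D.grade_Y 0 1 _ haG n _ hbG).1 (by push_cast; omega)
  -- vanishing of twisted actions on w by grading
  have hact_a : ∀ k : ℤ, -(T : ℤ) < k → M.act (D.iA a) k w = 0 := by
    intro k hk
    exact (hgrM 0 _ haG k 0 w hw).1 (by push_cast; omega)
  have hact_a' : ∀ k : ℤ, -(T : ℤ) < k → M.act (D.iA a') k w = 0 := by
    intro k hk
    exact (hgrM 0 _ ha'G k 0 w hw).1 (by push_cast; omega)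
  have hact_b : ∀ k : ℤ, 0 < k → M.act (D.iB b) k w = 0 := by
    intro k hk
    exact (hgrM 1 _ hbG k 0 w hw).1 (by push_cast; omega)
  -- skew symmetry: a₀b = -π(b)(a)
  have h0ab : D.VA.Y (D.iA a) 0 (D.iB b) = - D.iA (Vb.pi b a) := by
    have hB := D.VA.borcherds (D.iA a) (D.iB b) D.VA.vac (-1) 0 0
    rw [finsum_eq_single _ 0 (by
      intro i hi
      have h1 : D.VA.Y (D.iA a) ((0 : ℤ) + i) (D.iB b) = 0 := hYab _ (by omega)
      have h2 : D.VA.Y (D.iA a) ((i : ℕ) : ℤ) (D.iB b) = 0 := hYab _ (by omega)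
      simp [h1, h2])] at hB
    rw [finsum_eq_single _ 0 (by
      intro i hi
      obtain ⟨j, rfl⟩ := Nat.exists_eq_succ_of_ne_zero hi
      simp [qchoose_zero_succ'])] at hB
    have h1 : D.VA.Y (D.iB b) ((0 : ℤ) + ((0 : ℕ) : ℤ)) D.VA.vac = 0 :=
      D.VA.creation' _ _ (by norm_num)
    have h2 : D.VA.Y (D.iA a) ((-1 : ℤ) + ((0 : ℕ) : ℤ)) D.VA.vac = D.iA a := by
      rw [show ((-1 : ℤ) + ((0 : ℕ) : ℤ)) = -1 by norm_num, D.VA.creation]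
    rw [h1, h2] at hB
    have h3 : D.VA.Y (D.VA.Y (D.iA a) ((0 : ℤ) + ((0 : ℕ) : ℤ)) (D.iB b))
        ((-1 : ℤ) + 0 - ((0 : ℕ) : ℤ)) D.VA.vac = D.VA.Y (D.iA a) 0 (D.iB b) := by
      rw [show ((0 : ℤ) + ((0 : ℕ) : ℤ)) = 0 by norm_num,
        show ((-1 : ℤ) + 0 - ((0 : ℕ) : ℤ)) = -1 by norm_num, D.VA.creation]
    rw [h3] at hB
    have h4 : D.VA.Y (D.iB b) ((0 : ℤ) + 0 - ((0 : ℕ) : ℤ)) (D.iA a)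
        = D.iA (Vb.pi b a) := by
      rw [show ((0 : ℤ) + 0 - ((0 : ℕ) : ℤ)) = 0 by norm_num, D.hBA]
    rw [h4] at hB
    simpa [qchoose_zero'] using hB
  -- modular congruence
  have hmod : ((r : ℤ) - T) ≡ (r : ℤ) [ZMOD (T : ℤ)] :=
    Int.ModEq.symm (Int.modEq_iff_dvd.mpr ⟨-1, by ring⟩)
  ---- Part 1
  have hJ1 := M.jacobi (D.iA a) r hrT' hua (D.iA a') (-1) ((r : ℤ) - T) (-(r : ℤ)) hmod w
  rw [finsum_eq_single _ 0 (by
    intro m hm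
    have : D.VA.Y (D.iA a) ((-1 : ℤ) + m) (D.iA a') = 0 := hYaa' _ (by omega)
    simp [this])] at hJ1
  rw [finsum_eq_zero_of_forall_eq_zero (by
    intro m
    have hmT : 0 ≤ (m : ℤ) * (T : ℤ) := by positivity
    have hrTz : (r : ℤ) < (T : ℤ) := by exact_mod_cast hrT'
    have hr0z : 0 < (r : ℤ) := by exact_mod_cast hr0
    have e1 : M.act (D.iA a') (-(r : ℤ) + (m : ℤ) * T) w = 0 :=
      hact_a' _ (by linarith)
    have e2 : M.act (D.iA a) ((r : ℤ) - T + (m : ℤ) * T) w = 0 :=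
      hact_a _ (by linarith)
    simp [e1, e2])] at hJ1
  have hAAeq : D.VA.Y (D.iA a) ((-1 : ℤ) + ((0 : ℕ) : ℤ)) (D.iA a')
      = D.iA (a * a') := by
    rw [show ((-1 : ℤ) + ((0 : ℕ) : ℤ)) = -1 by norm_num, D.hAA]
  rw [hAAeq] at hJ1
  have hidx1 : ((r : ℤ) - T + -(r : ℤ) - ((0 : ℕ) : ℤ) * T) = -(T : ℤ) := by push_cast; ring
  rw [hidx1] at hJ1
  rw [qchoose_zero', Rat.cast_one, one_smul] at hJ1
  refine ⟨hJ1, ?_⟩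
  ---- Part 2
  have hJ2 := M.jacobi (D.iA a) r hrT' hua (D.iB b) (-1) ((r : ℤ) - T) ((T : ℤ) - r) hmod w
  rw [finsum_eq_finset_sum_of_support_subset _ (s := ({0, 1} : Finset ℕ)) (by
    apply Function.support_subset_iff'.mpr
    intro m hm
    have hm2 : 2 ≤ m := by
      rcases Nat.lt_or_ge m 2 with h | h
      · exfalso; interval_cases m <;> simp_all
      · exact h
    have : D.VA.Y (D.iA a) ((-1 : ℤ) + m) (D.iB b) = 0 := hYab _ (by omega)
    simp [this])] at hJ2
  rw [finsum_eq_zero_of_forall_eq_zero (by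
    intro m
    have hmT : 0 ≤ (m : ℤ) * (T : ℤ) := by positivity
    have hrTz : (r : ℤ) < (T : ℤ) := by exact_mod_cast hrT'
    have hr0z : 0 < (r : ℤ) := by exact_mod_cast hr0
    have e1 : M.act (D.iB b) ((T : ℤ) - r + (m : ℤ) * T) w = 0 :=
      hact_b _ (by linarith)
    have e2 : M.act (D.iA a) ((r : ℤ) - T + (m : ℤ) * T) w = 0 :=
      hact_a _ (by linarith)
    simp [e1, e2])] at hJ2
  rw [Finset.sum_pair (by norm_num)] at hJ2
  -- evaluate the two remaining terms
  have t0 : D.VA.Y (D.iA a) ((-1 : ℤ) + ((0 : ℕ) : ℤ)) (D.iB b)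
      = D.iB (Vb.act a b) := by
    rw [show ((-1 : ℤ) + ((0 : ℕ) : ℤ)) = -1 by norm_num, D.hAB]
  have t1 : D.VA.Y (D.iA a) ((-1 : ℤ) + ((1 : ℕ) : ℤ)) (D.iB b)
      = - D.iA (Vb.pi b a) := by
    rw [show ((-1 : ℤ) + ((1 : ℕ) : ℤ)) = 0 by norm_num, h0ab]
  rw [t0, t1] at hJ2
  have i0 : ((r : ℤ) - T + ((T : ℤ) - r) - ((0 : ℕ) : ℤ) * T) = 0 := by push_cast; ring
  have i1 : ((r : ℤ) - T + ((T : ℤ) - r) - ((1 : ℕ) : ℤ) * T) = -(T : ℤ) := by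
    push_cast; ring
  rw [i0, i1, qchoose_zero', qchoose_one'] at hJ2
  have hc : (((((r : ℤ) - T : ℤ) : ℚ) / T : ℚ) : ℂ) = -((1 : ℂ) - (r : ℂ) / T) := by
    have hT0 : (T : ℂ) ≠ 0 := by exact_mod_cast Nat.cast_ne_zero.mpr hT.ne'
    push_cast
    field_simp
    ring
  rw [hc] at hJ2
  simp only [map_neg, LinearMap.neg_apply, Pi.neg_apply, smul_neg, Rat.cast_one,
    one_smul] at hJ2
  linear_combination (norm := module) hJ2
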